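/- arXiv:1807.02290 — 6 statements merged into one kernel-verified Lean document; each statement's English description precedes it below -/
import Mathlib

section
/- Let n ≥ 1 and let f : 2^[n] → ℝ be submodular. Then the Lovasz extension f̂ of f is a convex function on the cube [0,1]^n: for all x, y ∈ [0,1]^n and all λ ∈ [0,1], f̂(λx + (1−λ)y) ≤ λ f̂(x) + (1−λ) f̂(y). -/
/-- A set function `f : 2^[n] → ℝ` is submodular if
`f(S' ∪ {i}) − f(S') ≥ f(S ∪ {i}) − f(S)` for all `S' ⊆ S` and `i ∉ S`. -/
def Submodular {n : ℕ} (f : Finset (Fin n) → ℝ) : Prop :=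
  ∀ S' S : Finset (Fin n), S' ⊆ S → ∀ i ∉ S,
    f (insert i S) - f S ≤ f (insert i S') - f S'

/-- The Lovasz extension `f̂(x) = ∫₀¹ f({i : x_i ≥ τ}) dτ`. -/
noncomputable def lovasz {n : ℕ} (f : Finset (Fin n) → ℝ) (x : Fin n → ℝ) : ℝ :=
  ∫ τ in (0:ℝ)..(1:ℝ), f (Finset.univ.filter (fun i => τ ≤ x i))

/-!
For every ordering `σ` of `Fin n`, telescoping `f` along the chain of tails
`{σ k, …, σ (n-1)}` and applying submodularity to each increment shows that the integrand
`τ ↦ f {i | τ ≤ x i}` dominates a step function whose integral is the affine function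
`g_σ(x) = f ∅ + ∑ₖ (f(tail k) - f(tail (k+1))) · x (σ k)`; equality holds when `σ` sorts `x`
increasingly. So on the cube the Lovász extension is the maximum of the affine functions `g_σ`,
hence convex.
-/

open Finset MeasureTheory

variable {n : ℕ}

noncomputable def superlevel (x : Fin n → ℝ) (τ : ℝ) : Finset (Fin n) :=
  univ.filter fun i => τ ≤ x i

@[simp]
lemma mem_superlevel {x : Fin n → ℝ} {τ : ℝ} {i : Fin n} : i ∈ superlevel x τ ↔ τ ≤ x i := by
  simp [superlevel]

lemma lovasz_eq_integral_superlevel (f : Finset (Fin n) → ℝ) (x : Fin n → ℝ) :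
    lovasz f x = ∫ τ in (0:ℝ)..1, f (superlevel x τ) :=
  rfl

section PermTail

variable (σ : Equiv.Perm (Fin n))

def permTail (k : ℕ) : Finset (Fin n) :=
  univ.filter fun i => k ≤ (σ.symm i : ℕ)

variable {σ} in
@[simp]
lemma mem_permTail {k : ℕ} {i : Fin n} : i ∈ permTail σ k ↔ k ≤ (σ.symm i : ℕ) := by
  simp [permTail]

@[simp]
lemma permTail_zero : permTail σ 0 = univ := by
  ext; simp

@[simp]
lemma permTail_self : permTail σ n = ∅ := by
  ext i; simp [(σ.symm i).isLt]

lemma permTail_eq_insert (k : Fin n) : permTail σ k = insert (σ k) (permTail σ (k + 1)) := by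
  ext i
  rw [mem_permTail, mem_insert, mem_permTail, ← Equiv.symm_apply_eq, Fin.ext_iff]
  omega

lemma inter_permTail_of_mem {S : Finset (Fin n)} {k : Fin n} (h : σ k ∈ S) :
    S ∩ permTail σ k = insert (σ k) (S ∩ permTail σ (k + 1)) := by
  rw [permTail_eq_insert, inter_insert_of_mem h]

lemma inter_permTail_of_notMem {S : Finset (Fin n)} {k : Fin n} (h : σ k ∉ S) :
    S ∩ permTail σ k = S ∩ permTail σ (k + 1) := by
  rw [permTail_eq_insert, inter_insert_of_notMem h]

lemma sum_sub_inter_permTail (f : Finset (Fin n) → ℝ) (S : Finset (Fin n)) :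
    ∑ k : Fin n, (f (S ∩ permTail σ k) - f (S ∩ permTail σ (k + 1))) = f S - f ∅ := by
  rw [Fin.sum_univ_eq_sum_range (fun k => f (S ∩ permTail σ k) - f (S ∩ permTail σ (k + 1))),
    sum_range_sub', permTail_zero, permTail_self, inter_univ, inter_empty]

end PermTail

section Greedy

variable (f : Finset (Fin n) → ℝ) (σ : Equiv.Perm (Fin n))

def marginalGain (k : ℕ) : ℝ :=
  f (permTail σ k) - f (permTail σ (k + 1))

def greedySum (S : Finset (Fin n)) : ℝ :=
  f ∅ + ∑ k : Fin n, if σ k ∈ S then marginalGain f σ k else 0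

def greedyValue (x : Fin n → ℝ) : ℝ :=
  f ∅ + ∑ k : Fin n, marginalGain f σ k * x (σ k)

variable {f σ}

lemma greedySum_eq_of_permTail_subset {S : Finset (Fin n)}
    (h : ∀ k : Fin n, σ k ∈ S → permTail σ k ⊆ S) : greedySum f σ S = f S := by
  rw [greedySum, ← eq_sub_iff_add_eq', ← sum_sub_inter_permTail σ f S]
  refine sum_congr rfl fun k _ => ?_
  split_ifs with hk
  · have hk' : permTail σ (k + 1) ⊆ S :=
      (permTail_eq_insert σ k ▸ h k hk).trans' (subset_insert _ _)
    rw [marginalGain, inter_eq_right.2 (h k hk), inter_eq_right.2 hk']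
  · rw [inter_permTail_of_notMem σ hk, sub_self]

lemma Submodular.greedySum_le (hf : Submodular f) (σ : Equiv.Perm (Fin n))
    (S : Finset (Fin n)) : greedySum f σ S ≤ f S := by
  rw [greedySum, ← le_sub_iff_add_le', ← sum_sub_inter_permTail σ f S]
  refine sum_le_sum fun k _ => ?_
  split_ifs with hk
  · rw [marginalGain, inter_permTail_of_mem σ hk, permTail_eq_insert σ k]
    exact hf _ _ inter_subset_right _ (by simp)
  · rw [inter_permTail_of_notMem σ hk, sub_self]

lemma greedyValue_convexComb (x y : Fin n → ℝ) (l : ℝ) :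
    greedyValue f σ (fun i => l * x i + (1 - l) * y i)
      = l * greedyValue f σ x + (1 - l) * greedyValue f σ y := by
  have hk : ∀ k : Fin n, marginalGain f σ k * (l * x (σ k) + (1 - l) * y (σ k))
      = l * (marginalGain f σ k * x (σ k)) + (1 - l) * (marginalGain f σ k * y (σ k)) :=
    fun k => by ring
  simp only [greedyValue, hk, sum_add_distrib, ← mul_sum]
  ring

end Greedy

section Integral

lemma intervalIntegrable_ite_le (a c b₁ b₂ : ℝ) :
    IntervalIntegrable (fun τ => if τ ≤ a then c else 0) volume b₁ b₂ := by
  have h := intervalIntegrable_const (μ := volume) (a := b₁) (b := b₂) (c := c)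
  exact ⟨h.1.indicator (t := Set.Iic a) measurableSet_Iic,
    h.2.indicator (t := Set.Iic a) measurableSet_Iic⟩

lemma integral_ite_le {a b₁ b₂ : ℝ} (ha : a ∈ Set.Icc b₁ b₂) (c : ℝ) :
    ∫ τ in b₁..b₂, (if τ ≤ a then c else 0) = c * (a - b₁) := by
  have h := intervalIntegral.integral_indicator (μ := volume) (f := fun _ => c) ha
  simp only [Set.indicator_apply, Set.mem_ofPred_eq] at h
  rw [h, intervalIntegral.integral_const, smul_eq_mul, mul_comm]

lemma intervalIntegrable_sum_ite_le {ι : Type*} (s : Finset ι) (a c : ι → ℝ) (b₁ b₂ : ℝ) :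
    IntervalIntegrable (fun τ => ∑ i ∈ s, if τ ≤ a i then c i else 0) volume b₁ b₂ := by
  simpa only [Finset.sum_fn] using
    IntervalIntegrable.sum s fun i _ => intervalIntegrable_ite_le (a i) (c i) b₁ b₂

variable (f : Finset (Fin n) → ℝ) (σ : Equiv.Perm (Fin n)) (x : Fin n → ℝ)

lemma intervalIntegrable_greedySum_superlevel :
    IntervalIntegrable (fun τ => greedySum f σ (superlevel x τ)) volume 0 1 := by
  simp only [greedySum, mem_superlevel]
  exact intervalIntegrable_const.add (intervalIntegrable_sum_ite_le _ _ _ _ _)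

lemma integral_greedySum_superlevel (hx : ∀ i, x i ∈ Set.Icc (0:ℝ) 1) :
    ∫ τ in (0:ℝ)..1, greedySum f σ (superlevel x τ) = greedyValue f σ x := by
  simp only [greedySum, mem_superlevel]
  rw [intervalIntegral.integral_add intervalIntegrable_const
      (intervalIntegrable_sum_ite_le _ _ _ _ _),
    intervalIntegral.integral_finsetSum fun k _ => intervalIntegrable_ite_le _ _ _ _,
    intervalIntegral.integral_const, sub_zero, one_smul, greedyValue]
  simp only [integral_ite_le (hx _), sub_zero]

lemma greedySum_sort_superlevel (τ : ℝ) :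
    greedySum f (Tuple.sort x) (superlevel x τ) = f (superlevel x τ) := by
  refine greedySum_eq_of_permTail_subset fun k hk i hi => ?_
  rw [mem_superlevel] at hk ⊢
  have hki : k ≤ (Tuple.sort x).symm i := mem_permTail.1 hi
  simpa using hk.trans (Tuple.monotone_sort x hki)

lemma intervalIntegrable_comp_superlevel :
    IntervalIntegrable (fun τ => f (superlevel x τ)) volume 0 1 := by
  simpa only [greedySum_sort_superlevel] using
    intervalIntegrable_greedySum_superlevel f (Tuple.sort x) x

lemma lovasz_eq_greedyValue_sort (hx : ∀ i, x i ∈ Set.Icc (0:ℝ) 1) :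
    lovasz f x = greedyValue f (Tuple.sort x) x := by
  simp only [lovasz_eq_integral_superlevel, ← integral_greedySum_superlevel f _ x hx,
    greedySum_sort_superlevel]

variable {f}

lemma Submodular.greedyValue_le_lovasz (hf : Submodular f) (hx : ∀ i, x i ∈ Set.Icc (0:ℝ) 1) :
    greedyValue f σ x ≤ lovasz f x := by
  rw [← integral_greedySum_superlevel f σ x hx, lovasz_eq_integral_superlevel]
  exact intervalIntegral.integral_mono_on zero_le_one
    (intervalIntegrable_greedySum_superlevel f σ x) (intervalIntegrable_comp_superlevel f x)
    fun τ _ => hf.greedySum_le σ _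

end Integral

theorem stmt0_general {n : ℕ} (f : Finset (Fin n) → ℝ) (hf : Submodular f)
    (x y : Fin n → ℝ) (hx : ∀ i, x i ∈ Set.Icc (0:ℝ) 1) (hy : ∀ i, y i ∈ Set.Icc (0:ℝ) 1)
    (l : ℝ) (hl : l ∈ Set.Icc (0:ℝ) 1) :
    lovasz f (fun i => l * x i + (1 - l) * y i) ≤ l * lovasz f x + (1 - l) * lovasz f y := by
  set z : Fin n → ℝ := fun i => l * x i + (1 - l) * y i
  have hz : ∀ i, z i ∈ Set.Icc (0:ℝ) 1 := fun i =>
    convex_Icc (0:ℝ) 1 (hx i) (hy i) hl.1 (sub_nonneg.2 hl.2) (add_sub_cancel l 1)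
  calc lovasz f z = greedyValue f (Tuple.sort z) z := lovasz_eq_greedyValue_sort f z hz
    _ = l * greedyValue f (Tuple.sort z) x + (1 - l) * greedyValue f (Tuple.sort z) y :=
      greedyValue_convexComb x y l
    _ ≤ l * lovasz f x + (1 - l) * lovasz f y :=
      add_le_add (mul_le_mul_of_nonneg_left (hf.greedyValue_le_lovasz _ x hx) hl.1)
        (mul_le_mul_of_nonneg_left (hf.greedyValue_le_lovasz _ y hy) (sub_nonneg.2 hl.2))

/-- The Lovasz extension of a submodular function is convex on the cube `[0,1]^n`. -/
theorem stmt0 {n : ℕ} (hn : 1 ≤ n) (f : Finset (Fin n) → ℝ) (hf : Submodular f)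
    (x y : Fin n → ℝ) (hx : ∀ i, x i ∈ Set.Icc (0:ℝ) 1) (hy : ∀ i, y i ∈ Set.Icc (0:ℝ) 1)
    (l : ℝ) (hl : l ∈ Set.Icc (0:ℝ) 1) :
    lovasz f (fun i => l * x i + (1 - l) * y i) ≤ l * lovasz f x + (1 - l) * lovasz f y :=
  stmt0_general f hf x y hx hy l hl
end

section
/- Let n ≥ 1, let f : 2^[n] → ℝ be submodular, let x ∈ [0,1]^n, and let π be a sorting permutation for x with associated maximal chain B_0 ⊂ B_1 ⊂ ⋯ ⊂ B_n. Then the greedy vector g of f at π is a subgradient of the Lovasz extension f̂ at x: for all y ∈ [0,1]^n, f̂(y) ≥ f̂(x) + ⟨g, y − x⟩. -/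
/-- The maximal chain associated with a permutation `π` of `[n]` (1-indexed:
`B i = {j : π(j) ≤ i}`, encoded with the 0-indexed `Fin n`-valued `π` as
`B i = {j : (π j : ℕ) < i}` for `i = 0, 1, …, n`). -/
def chainSet {n : ℕ} (π : Equiv.Perm (Fin n)) (i : ℕ) : Finset (Fin n) :=
  Finset.univ.filter (fun j => (π j : ℕ) < i)

/-!
The modular function `m S = f ∅ + ∑ j ∈ S, g j` lies below `f`: telescoping `f` along the
chain `S ∩ B_k`, each increment is at least the matching greedy increment `g j` by
submodularity. It agrees with `f` on every set that is downward closed for `π`, in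
particular on every superlevel set of `x`. The Lovasz extension is monotone in `f` and
equals `f ∅ + ⟨g, z⟩` on `m`, so `f̂ y ≥ f ∅ + ⟨g, y⟩` while `f̂ x = f ∅ + ⟨g, x⟩`.
-/

open Finset MeasureTheory

section Greedy

variable {n : ℕ} {f : Finset (Fin n) → ℝ} {π : Equiv.Perm (Fin n)} {g : Fin n → ℝ}

lemma mem_chainSet {j : Fin n} {k : ℕ} : j ∈ chainSet π k ↔ (π j : ℕ) < k := by
  simp [chainSet]

lemma chainSet_zero : chainSet π 0 = ∅ := by
  ext j
  simp [mem_chainSet]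

lemma chainSet_of_le {k : ℕ} (hk : n ≤ k) : chainSet π k = univ := by
  ext j
  simpa [mem_chainSet] using (π j).isLt.trans_le hk

lemma notMem_chainSet_self (j : Fin n) : j ∉ chainSet π (π j) := by
  simp [mem_chainSet]

lemma chainSet_succ (j : Fin n) : chainSet π (π j + 1) = insert j (chainSet π (π j)) := by
  ext i
  simp only [mem_chainSet, mem_insert, Nat.lt_succ_iff_lt_or_eq, Fin.val_inj, π.injective.eq_iff]
  tauto

lemma sum_inter_chainSet_succ_sub (f : Finset (Fin n) → ℝ) (π : Equiv.Perm (Fin n))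
    (S : Finset (Fin n)) :
    ∑ j, (f (S ∩ chainSet π (π j + 1)) - f (S ∩ chainSet π (π j))) = f S - f ∅ := by
  rw [Equiv.sum_comp π fun k : Fin n => f (S ∩ chainSet π (k + 1)) - f (S ∩ chainSet π k),
    Fin.sum_univ_eq_sum_range (fun k => f (S ∩ chainSet π (k + 1)) - f (S ∩ chainSet π k)),
    sum_range_sub (fun k => f (S ∩ chainSet π k)), chainSet_of_le le_rfl, chainSet_zero,
    inter_univ, inter_empty]

lemma ite_mem_le_inter_chainSet_succ_sub (hf : Submodular f)
    (hg : ∀ j, g j = f (chainSet π (π j + 1)) - f (chainSet π (π j)))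
    (S : Finset (Fin n)) (j : Fin n) :
    (if j ∈ S then g j else 0) ≤ f (S ∩ chainSet π (π j + 1)) - f (S ∩ chainSet π (π j)) := by
  rw [chainSet_succ]
  split_ifs with hj
  · rw [inter_insert_of_mem hj, hg, chainSet_succ]
    exact hf _ _ inter_subset_right j (notMem_chainSet_self j)
  · rw [inter_insert_of_notMem hj, sub_self]

lemma ite_mem_eq_inter_chainSet_succ_sub
    (hg : ∀ j, g j = f (chainSet π (π j + 1)) - f (chainSet π (π j)))
    {S : Finset (Fin n)} (hS : ∀ j ∈ S, chainSet π (π j) ⊆ S) (j : Fin n) :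
    (if j ∈ S then g j else 0) = f (S ∩ chainSet π (π j + 1)) - f (S ∩ chainSet π (π j)) := by
  rw [chainSet_succ]
  split_ifs with hj
  · rw [inter_insert_of_mem hj, inter_eq_right.2 (hS j hj), hg, chainSet_succ]
  · rw [inter_insert_of_notMem hj, sub_self]

theorem add_sum_le_of_greedy (hf : Submodular f)
    (hg : ∀ j, g j = f (chainSet π (π j + 1)) - f (chainSet π (π j))) (S : Finset (Fin n)) :
    f ∅ + ∑ j ∈ S, g j ≤ f S := by
  have := sum_le_sum fun j (_ : j ∈ univ) => ite_mem_le_inter_chainSet_succ_sub hf hg S j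
  rw [sum_ite_mem, univ_inter, sum_inter_chainSet_succ_sub] at this
  linarith

theorem add_sum_eq_of_greedy
    (hg : ∀ j, g j = f (chainSet π (π j + 1)) - f (chainSet π (π j)))
    {S : Finset (Fin n)} (hS : ∀ j ∈ S, chainSet π (π j) ⊆ S) :
    f ∅ + ∑ j ∈ S, g j = f S := by
  have := sum_congr rfl fun j (_ : j ∈ univ) => ite_mem_eq_inter_chainSet_succ_sub hg hS j
  rw [sum_ite_mem, univ_inter, sum_inter_chainSet_succ_sub] at this
  linarith

end Greedy

section Lovasz

variable {n : ℕ}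

lemma measurable_superlevelFinset (z : Fin n → ℝ) :
    Measurable fun τ : ℝ => univ.filter fun i => τ ≤ z i := by
  refine measurable_finset_iff.2 fun i => ?_
  simpa using measurableSet_setOfPred.1 (measurableSet_Iic (a := z i))

lemma intervalIntegrable_lovasz_integrand (f : Finset (Fin n) → ℝ) (z : Fin n → ℝ) :
    IntervalIntegrable (fun τ => f (univ.filter fun i => τ ≤ z i)) volume 0 1 := by
  rw [intervalIntegrable_iff]
  refine IntegrableOn.of_bound measure_Ioc_lt_top
    ((measurable_of_finite f).comp (measurable_superlevelFinset z)).aestronglyMeasurable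
    (∑ S, ‖f S‖) (Filter.Eventually.of_forall fun _ => ?_)
  exact single_le_sum (f := fun S => ‖f S‖) (fun _ _ => norm_nonneg _) (mem_univ _)

lemma lovasz_mono {f f' : Finset (Fin n) → ℝ} (h : ∀ S, f S ≤ f' S) (z : Fin n → ℝ) :
    lovasz f z ≤ lovasz f' z :=
  intervalIntegral.integral_mono_on zero_le_one (intervalIntegrable_lovasz_integrand f z)
    (intervalIntegrable_lovasz_integrand f' z) fun _ _ => h _

theorem lovasz_const_add_sum (c : ℝ) (g z : Fin n → ℝ) (hz : ∀ i, z i ∈ Set.Icc (0:ℝ) 1) :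
    lovasz (fun S => c + ∑ j ∈ S, g j) z = c + ∑ j, g j * z j := by
  have hind : ∀ j ∈ univ, IntervalIntegrable (fun τ => if τ ≤ z j then g j else 0) volume 0 1 :=
    fun j _ => by
      simpa using intervalIntegrable_lovasz_integrand (fun S => if j ∈ S then g j else 0) z
  have hj : ∀ j, ∫ τ in (0:ℝ)..1, (if τ ≤ z j then g j else 0) = g j * z j := fun j => by
    have : (fun τ => if τ ≤ z j then g j else 0) = {t | t ≤ z j}.indicator fun _ => g j := by
      ext τ; simp [Set.indicator_apply]
    rw [this, intervalIntegral.integral_indicator (hz j)]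
    simp [mul_comm]
  rw [lovasz, intervalIntegral.integral_add intervalIntegrable_const
    (intervalIntegrable_lovasz_integrand (fun S => ∑ j ∈ S, g j) z)]
  simp only [sum_filter]
  rw [intervalIntegral.integral_finsetSum hind]
  simp [hj]

end Lovasz

theorem stmt1_general {n : ℕ} (f : Finset (Fin n) → ℝ) (hf : Submodular f)
    (x : Fin n → ℝ) (hx : ∀ i, x i ∈ Set.Icc (0:ℝ) 1)
    (π : Equiv.Perm (Fin n))
    (hπ : ∀ j k, π j ≤ π k → x k ≤ x j)
    (g : Fin n → ℝ)
    (hg : ∀ j, g j = f (chainSet π ((π j : ℕ) + 1)) - f (chainSet π (π j : ℕ)))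
    (y : Fin n → ℝ) (hy : ∀ i, y i ∈ Set.Icc (0:ℝ) 1) :
    lovasz f x + ∑ j, g j * (y j - x j) ≤ lovasz f y := by
  have hx_eq : lovasz f x = lovasz (fun S => f ∅ + ∑ j ∈ S, g j) x := by
    refine intervalIntegral.integral_congr fun τ _ => (add_sum_eq_of_greedy hg ?_).symm
    intro j hj i hi
    simp only [mem_filter, mem_univ, true_and] at hj ⊢
    exact hj.trans (hπ i j (Fin.le_def.2 (mem_chainSet.1 hi).le))
  have hy_le := lovasz_mono (add_sum_le_of_greedy hf hg) y
  rw [hx_eq, lovasz_const_add_sum _ _ _ hx]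
  rw [lovasz_const_add_sum _ _ _ hy] at hy_le
  simp only [mul_sub, sum_sub_distrib]
  linarith

/-- The greedy vector of a submodular function at a sorting permutation for `x` is a
subgradient of the Lovasz extension at `x`. -/
theorem stmt1 {n : ℕ} (hn : 1 ≤ n) (f : Finset (Fin n) → ℝ) (hf : Submodular f)
    (x : Fin n → ℝ) (hx : ∀ i, x i ∈ Set.Icc (0:ℝ) 1)
    (π : Equiv.Perm (Fin n))
    (hπ : ∀ j k, π j ≤ π k → x k ≤ x j)
    (g : Fin n → ℝ)
    (hg : ∀ j, g j = f (chainSet π ((π j : ℕ) + 1)) - f (chainSet π (π j : ℕ)))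
    (y : Fin n → ℝ) (hy : ∀ i, y i ∈ Set.Icc (0:ℝ) 1) :
    lovasz f x + ∑ j, g j * (y j - x j) ≤ lovasz f y :=
  stmt1_general f hf x hx π hπ g hg y hy
end

section
/- Let n ≥ 1, let f : 2^[n] → ℝ, let π be a permutation of [n] with inverse σ and associated maximal chain B_0 ⊂ B_1 ⊂ ⋯ ⊂ B_n, and let ρ_0, …, ρ_n > 0 with Σ_{i=0}^n ρ_i = 1. Then the bandit gradient estimator ĝ is an unbiased estimate of the greedy vector g of f at π: its expectation, ρ_0·(−(1/ρ_0) f(B_0) e_{σ(1)}) + Σ_{i=1}^{n−1} [(ρ_i/2)·((2/ρ_i) f(B_i) e_{σ(i)}) + (ρ_i/2)·(−(2/ρ_i) f(B_i) e_{σ(i+1)})] + ρ_n·((1/ρ_n) f(B_n) e_{σ(n)}), equals the vector g ∈ ℝ^n with g_j = f(B_{π(j)}) − f(B_{π(j)−1}) for all j ∈ [n]. -/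
/-- The `j`-th standard basis vector of `ℝ^n`. -/
noncomputable def stdBasis {n : ℕ} (j : Fin n) : Fin n → ℝ := Pi.single j (1:ℝ)

/-- The bandit gradient estimator is an unbiased estimate of the greedy vector: its
expectation (the probability-weighted sum of its possible values) equals the greedy
vector `g` with `g_j = f(B_{π(j)}) − f(B_{π(j)−1})`.  Here `σ` is the inverse of the
(1-indexed) permutation `π`, i.e. `π(σ(i)) = i` for `1 ≤ i ≤ n`. -/
theorem stmt7 {n : ℕ} (hn : 1 ≤ n) (f : Finset (Fin n) → ℝ)
    (π : Equiv.Perm (Fin n)) (σ : ℕ → Fin n)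
    (hσ : ∀ i : ℕ, 1 ≤ i → i ≤ n → (π (σ i) : ℕ) + 1 = i)
    (ρ : ℕ → ℝ) (hρpos : ∀ i ≤ n, 0 < ρ i)
    (hρsum : ∑ i ∈ Finset.range (n + 1), ρ i = 1)
    (g : Fin n → ℝ)
    (hg : ∀ j, g j = f (chainSet π ((π j : ℕ) + 1)) - f (chainSet π (π j : ℕ))) :
    (ρ 0 • ((-(1 / ρ 0) * f (chainSet π 0)) • stdBasis (σ 1))
      + ∑ i ∈ Finset.Ico 1 n,
          ((ρ i / 2) • ((2 / ρ i * f (chainSet π i)) • stdBasis (σ i))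
            + (ρ i / 2) • ((-(2 / ρ i) * f (chainSet π i)) • stdBasis (σ (i + 1))))
      + ρ n • ((1 / ρ n * f (chainSet π n)) • stdBasis (σ n)))
    = g := by
  have hπ : ∀ j : Fin n, σ ((π j : ℕ) + 1) = j := by
    intro j
    have h := hσ ((π j : ℕ) + 1) (Nat.le_add_left 1 _) (Nat.succ_le_of_lt (π j).isLt)
    have h2 : π (σ ((π j : ℕ) + 1)) = π j := Fin.ext (by omega)
    exact π.injective h2
  funext j
  have hi0ge : 1 ≤ (π j : ℕ) + 1 := Nat.le_add_left 1 _
  have hi0le : (π j : ℕ) + 1 ≤ n := Nat.succ_le_of_lt (π j).isLt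
  have hσj : ∀ k, 1 ≤ k → k ≤ n → (j = σ k ↔ k = (π j : ℕ) + 1) := by
    intro k hk1 hkn
    constructor
    · intro h
      have hh := hσ k hk1 hkn
      rw [← h] at hh; omega
    · rintro rfl; exact (hπ j).symm
  have hρ0 : ρ 0 ≠ 0 := (hρpos 0 (Nat.zero_le n)).ne'
  have hρn : ρ n ≠ 0 := (hρpos n le_rfl).ne'
  simp only [Pi.add_apply, Pi.smul_apply, Finset.sum_apply, stdBasis, Pi.single_apply,
    smul_eq_mul, hg]
  have hsum : ∀ k ∈ Finset.Ico 1 n,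
      ρ k / 2 * (2 / ρ k * f (chainSet π k) * if j = σ k then 1 else 0)
        + ρ k / 2 * (-(2 / ρ k) * f (chainSet π k) * if j = σ (k + 1) then 1 else 0)
      = (if k = (π j : ℕ) + 1 then f (chainSet π k) else 0)
        - (if k = (π j : ℕ) then f (chainSet π k) else 0) := by
    intro k hk
    rw [Finset.mem_Ico] at hk
    have hρk : ρ k ≠ 0 := (hρpos k hk.2.le).ne'
    simp only [hσj k hk.1 hk.2.le, hσj (k+1) (by omega) (by omega),
      Nat.add_right_cancel_iff]
    have ha : ρ ((π j : ℕ) + 1) ≠ 0 := (hρpos _ (by omega)).ne'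
    have hb : ρ ((π j : ℕ)) ≠ 0 := (hρpos _ (by omega)).ne'
    by_cases h1 : k = (π j : ℕ) + 1 <;> by_cases h2 : k = (π j : ℕ) <;>
      simp [h1, h2] <;> field_simp <;> ring
  rw [Finset.sum_congr rfl hsum, Finset.sum_sub_distrib,
    Finset.sum_ite_eq' (Finset.Ico 1 n) ((π j : ℕ) + 1) (fun k => f (chainSet π k)),
    Finset.sum_ite_eq' (Finset.Ico 1 n) ((π j : ℕ)) (fun k => f (chainSet π k))]
  simp only [hσj 1 le_rfl hn, hσj n hn le_rfl, Finset.mem_Ico]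
  by_cases hA : (π j : ℕ) + 1 = n <;> by_cases hB : (π j : ℕ) = 0
  · have c1 : 1 = (π j : ℕ) + 1 := by omega
    have c2 : ¬(1 ≤ (π j : ℕ) + 1 ∧ (π j : ℕ) + 1 < n) := by omega
    have c3 : ¬(1 ≤ (π j : ℕ) ∧ (π j : ℕ) < n) := by omega
    have c4 : n = (π j : ℕ) + 1 := by omega
    rw [if_pos c1, if_pos c4, if_neg c2, if_neg c3, hA, hB]
    field_simp
    ring
  · have c1 : ¬(1 = (π j : ℕ) + 1) := by omega
    have c2 : ¬(1 ≤ (π j : ℕ) + 1 ∧ (π j : ℕ) + 1 < n) := by omega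
    have c3 : (1 ≤ (π j : ℕ) ∧ (π j : ℕ) < n) := by omega
    have c4 : n = (π j : ℕ) + 1 := by omega
    rw [if_neg c1, if_pos c4, if_neg c2, if_pos c3, hA]
    field_simp
    ring
  · have c1 : 1 = (π j : ℕ) + 1 := by omega
    have c2 : (1 ≤ (π j : ℕ) + 1 ∧ (π j : ℕ) + 1 < n) := by omega
    have c3 : ¬(1 ≤ (π j : ℕ) ∧ (π j : ℕ) < n) := by omega
    have c4 : ¬(n = (π j : ℕ) + 1) := by omega
    rw [if_pos c1, if_neg c4, if_pos c2, if_neg c3, hB]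
    field_simp
    ring
  · have c1 : ¬(1 = (π j : ℕ) + 1) := by omega
    have c2 : (1 ≤ (π j : ℕ) + 1 ∧ (π j : ℕ) + 1 < n) := by omega
    have c3 : (1 ≤ (π j : ℕ) ∧ (π j : ℕ) < n) := by omega
    have c4 : ¬(n = (π j : ℕ) + 1) := by omega
    rw [if_neg c1, if_neg c4, if_pos c2, if_pos c3]
    ring
end

section
/- Let n ≥ 1, M ≥ 0, 0 < γ ≤ 1, let f : 2^[n] → [−M, M], let π be a permutation of [n] with associated maximal chain B_0 ⊂ ⋯ ⊂ B_n, let μ_0, …, μ_n ≥ 0 with Σ_{i=0}^n μ_i = 1, and set ρ_i = (1−γ)μ_i + γ/(n+1). Then the expected squared Euclidean norm of the bandit gradient estimator satisfies E[‖ĝ‖₂²] = f(B_0)²/ρ_0 + Σ_{i=1}^{n−1} 4 f(B_i)²/ρ_i + f(B_n)²/ρ_n ≤ 16 M² n² / γ. -/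
lemma sumsq_aux {n : ℕ} (c : ℝ) (j : Fin n) :
    ∑ k, ((c • stdBasis j) k) ^ 2 = c ^ 2 := by
  have : ∀ k : Fin n, ((c • stdBasis j) k) ^ 2
      = if k = j then c ^ 2 else 0 := by
    intro k
    by_cases h : k = j <;> simp [stdBasis, Pi.single_apply, h]
  rw [Finset.sum_congr rfl fun k _ => this k]
  simp

/-- Second-moment bound for the bandit gradient estimator: with sampling probabilities
`ρ_i = (1−γ)μ_i + γ/(n+1)`, the expected squared Euclidean norm of the estimator equals
`f(B_0)²/ρ_0 + Σ_{i=1}^{n−1} 4 f(B_i)²/ρ_i + f(B_n)²/ρ_n ≤ 16M²n²/γ`.  Here `σ` is the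
inverse of the (1-indexed) permutation `π`. -/
theorem stmt8 {n : ℕ} (hn : 1 ≤ n) (M γ : ℝ) (hM : 0 ≤ M) (hγ0 : 0 < γ) (hγ1 : γ ≤ 1)
    (f : Finset (Fin n) → ℝ) (hrange : ∀ S : Finset (Fin n), f S ∈ Set.Icc (-M) M)
    (π : Equiv.Perm (Fin n)) (σ : ℕ → Fin n)
    (hσ : ∀ i : ℕ, 1 ≤ i → i ≤ n → (π (σ i) : ℕ) + 1 = i)
    (μ : ℕ → ℝ) (hμ : ∀ i ≤ n, 0 ≤ μ i)
    (hμsum : ∑ i ∈ Finset.range (n + 1), μ i = 1)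
    (ρ : ℕ → ℝ) (hρ : ∀ i, ρ i = (1 - γ) * μ i + γ / (n + 1)) :
    (ρ 0 * (∑ k, ((-(1 / ρ 0) * f (chainSet π 0)) • stdBasis (σ 1)) k ^ 2)
      + ∑ i ∈ Finset.Ico 1 n,
          (ρ i / 2 * (∑ k, ((2 / ρ i * f (chainSet π i)) • stdBasis (σ i)) k ^ 2)
            + ρ i / 2 * (∑ k, ((-(2 / ρ i) * f (chainSet π i)) • stdBasis (σ (i + 1))) k ^ 2))
      + ρ n * (∑ k, ((1 / ρ n * f (chainSet π n)) • stdBasis (σ n)) k ^ 2))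
    = f (chainSet π 0) ^ 2 / ρ 0
        + (∑ i ∈ Finset.Ico 1 n, 4 * f (chainSet π i) ^ 2 / ρ i)
        + f (chainSet π n) ^ 2 / ρ n
    ∧ f (chainSet π 0) ^ 2 / ρ 0
        + (∑ i ∈ Finset.Ico 1 n, 4 * f (chainSet π i) ^ 2 / ρ i)
        + f (chainSet π n) ^ 2 / ρ n
      ≤ 16 * M ^ 2 * n ^ 2 / γ := by
  have hn1 : (0:ℝ) < (n:ℝ) + 1 := by positivity
  have hρlb : ∀ i ≤ n, γ / (n + 1) ≤ ρ i := by
    intro i hi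
    rw [hρ i]
    nlinarith [hμ i hi]
  have hρpos : ∀ i ≤ n, 0 < ρ i := fun i hi =>
    lt_of_lt_of_le (by positivity) (hρlb i hi)
  have hfsq : ∀ S : Finset (Fin n), f S ^ 2 ≤ M ^ 2 := by
    intro S
    obtain ⟨h1, h2⟩ := hrange S
    nlinarith
  constructor
  · rw [sumsq_aux, sumsq_aux]
    have h0 : 0 < ρ 0 := hρpos 0 (Nat.zero_le n)
    have hN : 0 < ρ n := hρpos n le_rfl
    have hmid : ∀ i ∈ Finset.Ico 1 n,
        (ρ i / 2 * (∑ k, ((2 / ρ i * f (chainSet π i)) • stdBasis (σ i)) k ^ 2)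
          + ρ i / 2 * (∑ k, ((-(2 / ρ i) * f (chainSet π i)) • stdBasis (σ (i + 1))) k ^ 2))
        = 4 * f (chainSet π i) ^ 2 / ρ i := by
      intro i hi
      rw [Finset.mem_Ico] at hi
      have hip : 0 < ρ i := hρpos i (le_of_lt hi.2)
      rw [sumsq_aux, sumsq_aux]
      field_simp
      ring
    rw [Finset.sum_congr rfl hmid]
    field_simp
  · have hbound : ∀ i ≤ n, f (chainSet π i) ^ 2 / ρ i ≤ M ^ 2 * ((n + 1) / γ) := by
      intro i hi
      have hip : 0 < ρ i := hρpos i hi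
      have h1 : 1 / ρ i ≤ (n + 1) / γ := by
        rw [div_le_div_iff₀ hip hγ0]
        have := hρlb i hi
        rw [div_le_iff₀ hn1] at this
        linarith
      calc f (chainSet π i) ^ 2 / ρ i = f (chainSet π i) ^ 2 * (1 / ρ i) := by ring
        _ ≤ M ^ 2 * ((n + 1) / γ) := by
            apply mul_le_mul (hfsq _) h1 (by positivity) (by positivity)
    have hmid : ∀ i ∈ Finset.Ico 1 n,
        4 * f (chainSet π i) ^ 2 / ρ i ≤ 4 * (M ^ 2 * ((n + 1) / γ)) := by
      intro i hi
      rw [Finset.mem_Ico] at hi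
      have := hbound i (le_of_lt hi.2)
      calc 4 * f (chainSet π i) ^ 2 / ρ i = 4 * (f (chainSet π i) ^ 2 / ρ i) := by ring
        _ ≤ 4 * (M ^ 2 * ((n + 1) / γ)) := by linarith
    have hsum : (∑ i ∈ Finset.Ico 1 n, 4 * f (chainSet π i) ^ 2 / ρ i)
        ≤ (n - 1 : ℕ) * (4 * (M ^ 2 * ((n + 1) / γ))) := by
      calc (∑ i ∈ Finset.Ico 1 n, 4 * f (chainSet π i) ^ 2 / ρ i)
          ≤ ∑ i ∈ Finset.Ico 1 n, 4 * (M ^ 2 * ((n + 1) / γ)) :=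
            Finset.sum_le_sum hmid
        _ = (n - 1 : ℕ) * (4 * (M ^ 2 * ((n + 1) / γ))) := by
            rw [Finset.sum_const, Nat.card_Ico]
            simp [nsmul_eq_mul]
    have h0 := hbound 0 (Nat.zero_le n)
    have hNb := hbound n le_rfl
    have hcast : ((n - 1 : ℕ) : ℝ) = (n : ℝ) - 1 := by
      rw [Nat.cast_sub hn]; simp
    rw [hcast] at hsum
    have hnn : (1:ℝ) ≤ (n:ℝ) := by exact_mod_cast hn
    have key : 2 * (M ^ 2 * ((n + 1) / γ)) + ((n:ℝ) - 1) * (4 * (M ^ 2 * ((n + 1) / γ)))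
        ≤ 16 * M ^ 2 * n ^ 2 / γ := by
      have h2 : 2 * (M ^ 2 * (((n:ℝ) + 1) / γ)) + ((n:ℝ) - 1) * (4 * (M ^ 2 * ((n + 1) / γ)))
          = M ^ 2 * ((4 * (n:ℝ) - 2) * ((n:ℝ) + 1)) / γ := by
        field_simp
        ring
      rw [h2, div_le_div_iff₀ hγ0 hγ0]
      nlinarith [sq_nonneg M, mul_nonneg (sq_nonneg M) hγ0.le, sq_nonneg ((n:ℝ) - 1)]
    linarith
end

section
/- Let X and Y be measurable spaces, let μ and ν be probability measures on X, let κ be a Markov kernel from X to Y, and let ε ≥ 0 and δ ≥ 0. If μ(S) ≤ e^ε · ν(S) + δ for every measurable S ⊆ X, then the pushforward measures under κ satisfy (μ.bind κ)(S') ≤ e^ε · (ν.bind κ)(S') + δ for every measurable S' ⊆ Y, where (μ.bind κ)(S') = ∫ κ(x)(S') dμ(x). -/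
/-!
Writing `g x = κ x S'`, a measurable function with values in `[0, 1]`, the layer cake formula
expresses `(μ.bind κ) S' = ∫⁻ g ∂μ` as `∫₀¹ μ {g > t} dt`. Applying the hypothesis to each
superlevel set `{g > t}` and integrating over `t ∈ (0, 1]` gives
`∫₀¹ (e^ε ν {g > t} + δ) dt = e^ε ∫⁻ g ∂ν + δ`.
-/

open MeasureTheory Set
open scoped ENNReal

section

variable {X : Type*} [MeasurableSpace X]

theorem lintegral_ofReal_eq_setLIntegral_Ioc_meas_lt (ρ : Measure X) {f : X → ℝ}
    (hf : Measurable f) (hf0 : 0 ≤ f) (hf1 : f ≤ 1) :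
    ∫⁻ x, ENNReal.ofReal (f x) ∂ρ = ∫⁻ t in Ioc 0 1, ρ {x | t < f x} := by
  have hnull : EqOn (fun t => ρ {x | t < f x}) 0 (Ioi 1) := fun t ht => by
    simp only [Pi.zero_apply, measure_eq_zero_iff_ae_notMem]
    exact ae_of_all _ fun x hx => (hf1 x).not_gt ((mem_Ioi.mp ht).trans hx)
  rw [lintegral_eq_lintegral_meas_lt ρ (ae_of_all _ hf0) hf.aemeasurable,
    ← Ioc_union_Ioi_eq_Ioi zero_le_one, lintegral_union measurableSet_Ioi (Ioc_disjoint_Ioi le_rfl),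
    setLIntegral_congr_fun measurableSet_Ioi hnull, Pi.zero_def, lintegral_zero, add_zero]

theorem lintegral_le_mul_lintegral_add_of_forall_measure_le {μ ν : Measure X} {c δ : ℝ≥0∞}
    (h : ∀ S, MeasurableSet S → μ S ≤ c * ν S + δ) {f : X → ℝ≥0∞} (hf : Measurable f)
    (hf1 : ∀ x, f x ≤ 1) :
    ∫⁻ x, f x ∂μ ≤ c * ∫⁻ x, f x ∂ν + δ := by
  set g : X → ℝ := fun x => (f x).toReal
  have hg : ∀ x, ENNReal.ofReal (g x) = f x :=
    fun x => ENNReal.ofReal_toReal ((hf1 x).trans_lt ENNReal.one_lt_top).ne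
  have hgm : Measurable g := hf.ennreal_toReal
  have hg0 : 0 ≤ g := fun x => ENNReal.toReal_nonneg
  have hg1 : g ≤ 1 := fun x => ENNReal.toReal_le_of_le_ofReal zero_le_one (by simpa using hf1 x)
  have hν : Measurable fun t : ℝ => ν {x | t < g x} :=
    Antitone.measurable fun s t hst => measure_mono fun x hx => hst.trans_lt hx
  simp_rw [← hg]
  rw [lintegral_ofReal_eq_setLIntegral_Ioc_meas_lt μ hgm hg0 hg1,
    lintegral_ofReal_eq_setLIntegral_Ioc_meas_lt ν hgm hg0 hg1]
  calc ∫⁻ t in Ioc 0 1, μ {x | t < g x}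
      ≤ ∫⁻ t in Ioc 0 1, (c * ν {x | t < g x} + δ) :=
        lintegral_mono fun t => h _ (measurableSet_lt measurable_const hgm)
    _ = c * (∫⁻ t in Ioc 0 1, ν {x | t < g x}) + δ := by
        rw [lintegral_add_right _ measurable_const, lintegral_const_mul _ hν, setLIntegral_const,
          Real.volume_Ioc, sub_zero, ENNReal.ofReal_one, mul_one]

end

theorem stmt15_general {X Y : Type*} [MeasurableSpace X] [MeasurableSpace Y]
    (μ ν : Measure X)
    (κ : ProbabilityTheory.Kernel X Y) [ProbabilityTheory.IsMarkovKernel κ]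
    (ε δ : ℝ)
    (h : ∀ S : Set X, MeasurableSet S →
      μ S ≤ ENNReal.ofReal (Real.exp ε) * ν S + ENNReal.ofReal δ) :
    ∀ S' : Set Y, MeasurableSet S' →
      (μ.bind fun x => κ x) S'
        ≤ ENNReal.ofReal (Real.exp ε) * ((ν.bind fun x => κ x) S') + ENNReal.ofReal δ := by
  intro S' hS'
  rw [Measure.bind_apply hS' κ.aemeasurable, Measure.bind_apply hS' κ.aemeasurable]
  exact lintegral_le_mul_lintegral_add_of_forall_measure_le h (κ.measurable_coe hS')
    fun x => prob_le_one

/-- Post-processing preserves (ε, δ)-differential privacy: if `μ(S) ≤ e^ε ν(S) + δ` for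
all measurable `S`, then the same holds for the pushforwards of `μ` and `ν` under any
Markov kernel `κ`. -/
theorem stmt15 {X Y : Type*} [MeasurableSpace X] [MeasurableSpace Y]
    (μ ν : Measure X) [IsProbabilityMeasure μ] [IsProbabilityMeasure ν]
    (κ : ProbabilityTheory.Kernel X Y) [ProbabilityTheory.IsMarkovKernel κ]
    (ε δ : ℝ) (hε : 0 ≤ ε) (hδ : 0 ≤ δ)
    (h : ∀ S : Set X, MeasurableSet S →
      μ S ≤ ENNReal.ofReal (Real.exp ε) * ν S + ENNReal.ofReal δ) :
    ∀ S' : Set Y, MeasurableSet S' →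
      (μ.bind fun x => κ x) S'
        ≤ ENNReal.ofReal (Real.exp ε) * ((ν.bind fun x => κ x) S') + ENNReal.ofReal δ :=
  stmt15_general μ ν κ ε δ h
end

section
/- Let X ⊆ ℝ^d be a nonempty convex compact set of diameter at most D (i.e., ‖x − y‖₂ ≤ D for all x, y ∈ X), let H > 0, L ≥ 0, and let f_1, …, f_T : ℝ^d → ℝ be functions that are each H-strongly convex on X (f_t(λx + (1−λ)y) ≤ λf_t(x) + (1−λ)f_t(y) − (H/2)λ(1−λ)‖x − y‖₂² for x, y ∈ X, λ ∈ [0,1]) and L-Lipschitz on X (|f_t(x) − f_t(y)| ≤ L‖x − y‖₂ for x, y ∈ X). Let T ≥ 2, let x_1 ∈ X be arbitrary, and for each 1 ≤ t ≤ T−1 let x_{t+1} ∈ X satisfy Σ_{τ=1}^t f_τ(x_{t+1}) ≤ Σ_{τ=1}^t f_τ(x) for all x ∈ X (Follow The Leader iterates). Then Σ_{t=1}^T f_t(x_t) − min_{x ∈ X} Σ_{t=1}^T f_t(x) ≤ 2(L + HD)² ln(T) / H. -/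
/-!
By the Be-the-Leader lemma the regret is at most `∑ₜ (fₜ xₜ - fₜ xₜ₊₁)`, where `x_{T+1}` is a
minimizer of the total loss. For `t ≥ 2`, `xₜ` minimizes `F_{t-1} = ∑_{τ<t} f_τ` and `xₜ₊₁`
minimizes the `tH`-strongly convex `Fₜ = F_{t-1} + fₜ`; quadratic growth of `Fₜ` at its minimizer
gives `tH/2 ‖xₜ - xₜ₊₁‖² ≤ fₜ xₜ - fₜ xₜ₊₁ ≤ L ‖xₜ - xₜ₊₁‖`, so the `t`-th term is at most
`2L²/(tH)`. The first term is at most `LD`, and `∑_{t=2}^T 1/t ≤ log T`.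
-/

open Finset Filter Topology

section StrongConvexity

variable {E : Type*} [NormedAddCommGroup E] [NormedSpace ℝ E] {s : Set E} {m : ℝ} {f : E → ℝ}

lemma strongConvexOn_of_forall_mem_Icc (hs : Convex ℝ s)
    (h : ∀ x ∈ s, ∀ y ∈ s, ∀ l ∈ Set.Icc (0 : ℝ) 1,
      f (l • x + (1 - l) • y) ≤ l * f x + (1 - l) * f y - m / 2 * l * (1 - l) * ‖x - y‖ ^ 2) :
    StrongConvexOn s m f := by
  refine ⟨hs, fun x hx y hy a b ha hb hab => ?_⟩
  obtain rfl : b = 1 - a := eq_sub_of_add_eq' hab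
  have := h x hx y hy a ⟨ha, by linarith⟩
  simp only [smul_eq_mul]
  linarith

lemma StrongConvexOn.sum {ι : Type*} {t : Finset ι} {m : ι → ℝ} {f : ι → E → ℝ}
    (hs : Convex ℝ s) (h : ∀ i ∈ t, StrongConvexOn s (m i) (f i)) :
    StrongConvexOn s (∑ i ∈ t, m i) fun x => ∑ i ∈ t, f i x := by
  refine ⟨hs, fun x hx y hy a b ha hb hab => ?_⟩
  have := sum_le_sum fun i hi => (h i hi).2 hx hy ha hb hab
  simp only [smul_eq_mul, sum_sub_distrib, sum_add_distrib, ← mul_sum] at this ⊢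
  rwa [← sum_mul, ← sum_div] at this

lemma StrongConvexOn.mul_sq_norm_sub_le_of_isMinOn (hf : StrongConvexOn s m f) {u v : E}
    (hu : u ∈ s) (hv : v ∈ s) (hmin : IsMinOn f s v) :
    m / 2 * ‖u - v‖ ^ 2 ≤ f u - f v := by
  have hsmall : ∀ a ∈ Set.Ioc (0 : ℝ) 1, (1 - a) * (m / 2 * ‖u - v‖ ^ 2) ≤ f u - f v := by
    rintro a ⟨ha0, ha1⟩
    have hab : a + (1 - a) = 1 := add_sub_cancel a 1
    have hconv := hf.2 hu hv ha0.le (sub_nonneg.2 ha1) hab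
    have hle := isMinOn_iff.mp hmin _ (hf.1 hu hv ha0.le (sub_nonneg.2 ha1) hab)
    simp only [smul_eq_mul] at hconv
    refine le_of_mul_le_mul_left ?_ ha0
    linarith
  have hlim : Tendsto (fun a : ℝ => (1 - a) * (m / 2 * ‖u - v‖ ^ 2)) (𝓝[>] 0)
      (𝓝 (m / 2 * ‖u - v‖ ^ 2)) := by
    refine tendsto_nhdsWithin_of_tendsto_nhds ?_
    exact ((continuous_const.sub continuous_id).mul continuous_const).tendsto' _ _ (by simp)
  exact le_of_tendsto hlim (eventually_of_mem (Ioc_mem_nhdsGT one_pos) hsmall)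

lemma StrongConvexOn.sub_le_of_isMinOn_add {G g : E → ℝ} {σ L : ℝ} {u v : E}
    (hF : StrongConvexOn s σ fun x => G x + g x) (hσ : 0 < σ) (hu : u ∈ s) (hv : v ∈ s)
    (hG : IsMinOn G s u) (hFv : IsMinOn (fun x => G x + g x) s v)
    (hg : g u - g v ≤ L * ‖u - v‖) :
    g u - g v ≤ 2 * L ^ 2 / σ := by
  have hgrowth := hF.mul_sq_norm_sub_le_of_isMinOn hu hv hFv
  have hGuv := isMinOn_iff.mp hG v hv
  rw [le_div_iff₀ hσ]
  -- `σ δ ≤ σ L r ≤ L² + σ² r² / 4 ≤ L² + σ δ / 2` with `δ = g u - g v`, `r = ‖u - v‖`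
  nlinarith [sq_nonneg (σ * ‖u - v‖ / 2 - L), mul_le_mul_of_nonneg_left hg hσ.le]

end StrongConvexity

section FollowTheLeader

variable {α : Type*} {X : Set α} (f : ℕ → α → ℝ)

theorem be_the_leader (y : ℕ → α) (n : ℕ) (hy : ∀ t ∈ Icc 1 n, y (t + 1) ∈ X)
    (hmin : ∀ t ∈ Icc 1 n, IsMinOn (fun x => ∑ τ ∈ Icc 1 t, f τ x) X (y (t + 1))) :
    ∀ x ∈ X, ∑ t ∈ Icc 1 n, f t (y (t + 1)) ≤ ∑ t ∈ Icc 1 n, f t x := by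
  induction n with
  | zero => simp
  | succ n ih =>
    intro x hx
    have hsub : Icc 1 n ⊆ Icc 1 (n + 1) := Icc_subset_Icc_right n.le_succ
    have hlast : n + 1 ∈ Icc 1 (n + 1) := by simp
    have hprev := ih (fun t ht => hy t (hsub ht)) (fun t ht => hmin t (hsub ht))
      (y (n + 2)) (hy (n + 1) hlast)
    calc ∑ t ∈ Icc 1 (n + 1), f t (y (t + 1))
        = ∑ t ∈ Icc 1 n, f t (y (t + 1)) + f (n + 1) (y (n + 2)) := sum_Icc_succ_top (by omega) _
      _ ≤ ∑ t ∈ Icc 1 n, f t (y (n + 2)) + f (n + 1) (y (n + 2)) := by gcongr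
      _ = ∑ t ∈ Icc 1 (n + 1), f t (y (n + 2)) := (sum_Icc_succ_top (by omega) _).symm
      _ ≤ ∑ t ∈ Icc 1 (n + 1), f t x := isMinOn_iff.mp (hmin (n + 1) hlast) x hx

theorem sum_sub_sInf_le_sum_sub_succ (y : ℕ → α) (hX : X.Nonempty) (n : ℕ)
    (hy : ∀ t ∈ Icc 1 n, y (t + 1) ∈ X)
    (hmin : ∀ t ∈ Icc 1 n, IsMinOn (fun x => ∑ τ ∈ Icc 1 t, f τ x) X (y (t + 1))) :
    ∑ t ∈ Icc 1 n, f t (y t) - sInf ((fun x => ∑ t ∈ Icc 1 n, f t x) '' X)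
      ≤ ∑ t ∈ Icc 1 n, (f t (y t) - f t (y (t + 1))) := by
  have hleader : ∑ t ∈ Icc 1 n, f t (y (t + 1)) ≤ sInf ((fun x => ∑ t ∈ Icc 1 n, f t x) '' X) :=
    le_csInf (hX.image _) <| by
      rintro _ ⟨x, hx, rfl⟩
      exact be_the_leader f y n hy hmin x hx
  rw [sum_sub_distrib]
  linarith

lemma isMinOn_partialSum_update {xs : ℕ → α} {T : ℕ} {w : α}
    (hftl : ∀ t : ℕ, 1 ≤ t → t ≤ T - 1 →
      ∀ y ∈ X, ∑ τ ∈ Icc 1 t, f τ (xs (t + 1)) ≤ ∑ τ ∈ Icc 1 t, f τ y)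
    (hw : IsMinOn (fun x => ∑ τ ∈ Icc 1 T, f τ x) X w) :
    ∀ t ∈ Icc 1 T,
      IsMinOn (fun x => ∑ τ ∈ Icc 1 t, f τ x) X (Function.update xs (T + 1) w (t + 1)) := by
  intro t ht
  rw [mem_Icc] at ht
  rcases eq_or_lt_of_le ht.2 with rfl | hlt
  · simpa using hw
  · rw [Function.update_of_ne (by omega)]
    exact isMinOn_iff.mpr (hftl t ht.1 (by omega))

end FollowTheLeader

lemma sum_Ioc_one_inv_le_log (n : ℕ) : ∑ t ∈ Ioc 1 n, (t : ℝ)⁻¹ ≤ Real.log n := by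
  rcases Nat.eq_zero_or_pos n with rfl | hn
  · simp
  have h := harmonic_le_one_add_log n
  rw [harmonic_eq_sum_Icc, ← add_sum_Ioc_eq_sum_Icc hn] at h
  push_cast at h
  linarith

section StrongConvexLosses

variable {E : Type*} [NormedAddCommGroup E] [NormedSpace ℝ E] {X : Set E} {H L : ℝ} {T : ℕ}
  {f : ℕ → E → ℝ} {y : ℕ → E}

theorem sum_Ioc_sub_succ_le_of_strongConvexOn (hX : Convex ℝ X) (hH : 0 < H)
    (hsc : ∀ t ∈ Icc 1 T, StrongConvexOn X H (f t))
    (hlip : ∀ t ∈ Icc 1 T, ∀ x ∈ X, ∀ x' ∈ X, f t x - f t x' ≤ L * ‖x - x'‖)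
    (hy : ∀ t ∈ Icc 1 (T + 1), y t ∈ X)
    (hmin : ∀ t ∈ Icc 1 T, IsMinOn (fun x => ∑ τ ∈ Icc 1 t, f τ x) X (y (t + 1))) :
    ∑ t ∈ Ioc 1 T, (f t (y t) - f t (y (t + 1))) ≤ 2 * L ^ 2 / H * ∑ t ∈ Ioc 1 T, (t : ℝ)⁻¹ := by
  rw [mul_sum]
  refine sum_le_sum fun t ht => ?_
  obtain ⟨s, rfl⟩ : ∃ s, t = s + 1 := ⟨t - 1, by simp only [mem_Ioc] at ht; omega⟩
  simp only [mem_Ioc] at ht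
  have hsplit : ∀ x, ∑ τ ∈ Icc 1 (s + 1), f τ x = ∑ τ ∈ Icc 1 s, f τ x + f (s + 1) x :=
    fun x => sum_Icc_succ_top (by omega) _
  have hF : StrongConvexOn X ((s + 1 : ℕ) * H) fun x => ∑ τ ∈ Icc 1 s, f τ x + f (s + 1) x := by
    have := StrongConvexOn.sum hX fun τ hτ => hsc τ (Icc_subset_Icc_right ht.2 hτ)
    simpa only [sum_const, Nat.card_Icc, add_tsub_cancel_right, nsmul_eq_mul, hsplit] using this
  have hFmin := hmin (s + 1) (by simp; omega)
  simp only [hsplit] at hFmin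
  calc f (s + 1) (y (s + 1)) - f (s + 1) (y (s + 1 + 1))
      ≤ 2 * L ^ 2 / ((s + 1 : ℕ) * H) :=
        hF.sub_le_of_isMinOn_add (by positivity) (hy _ (by simp; omega)) (hy _ (by simp; omega))
          (hmin s (by simp; omega)) hFmin
          (hlip _ (by simp; omega) _ (hy _ (by simp; omega)) _ (hy _ (by simp; omega)))
    _ = 2 * L ^ 2 / H * ((s + 1 : ℕ) : ℝ)⁻¹ := by field_simp

theorem sum_Icc_sub_succ_le_of_strongConvexOn (hX : Convex ℝ X) (hH : 0 < H) (hL : 0 ≤ L) {D : ℝ}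
    (hD : ∀ x ∈ X, ∀ x' ∈ X, ‖x - x'‖ ≤ D) (hT : 1 ≤ T)
    (hsc : ∀ t ∈ Icc 1 T, StrongConvexOn X H (f t))
    (hlip : ∀ t ∈ Icc 1 T, ∀ x ∈ X, ∀ x' ∈ X, f t x - f t x' ≤ L * ‖x - x'‖)
    (hy : ∀ t ∈ Icc 1 (T + 1), y t ∈ X)
    (hmin : ∀ t ∈ Icc 1 T, IsMinOn (fun x => ∑ τ ∈ Icc 1 t, f τ x) X (y (t + 1))) :
    ∑ t ∈ Icc 1 T, (f t (y t) - f t (y (t + 1))) ≤ L * D + 2 * L ^ 2 / H * Real.log T := by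
  have hy₁ : y 1 ∈ X := hy 1 (by simp)
  have hy₂ : y 2 ∈ X := hy 2 (by simp; omega)
  rw [← add_sum_Ioc_eq_sum_Icc hT]
  gcongr
  · exact (hlip 1 (by simp; omega) _ hy₁ _ hy₂).trans
      (mul_le_mul_of_nonneg_left (hD _ hy₁ _ hy₂) hL)
  · exact (sum_Ioc_sub_succ_le_of_strongConvexOn hX hH hsc hlip hy hmin).trans
      (by gcongr; exact sum_Ioc_one_inv_le_log T)

end StrongConvexLosses

lemma mul_add_div_mul_log_le {L D H : ℝ} (hL : 0 ≤ L) (hD : 0 ≤ D) (hH : 0 < H) {T : ℕ}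
    (hT : 2 ≤ T) :
    L * D + 2 * L ^ 2 / H * Real.log T ≤ 2 * (L + H * D) ^ 2 * Real.log T / H := by
  have hlog : 1 / 4 ≤ Real.log T := by
    have := Real.log_le_log (by norm_num) (show (2 : ℝ) ≤ T by exact_mod_cast hT)
    linarith [Real.log_two_gt_d9]
  rw [le_div_iff₀ hH]
  calc (L * D + 2 * L ^ 2 / H * Real.log T) * H = L * D * H + 2 * L ^ 2 * Real.log T := by
        field_simp
    _ ≤ 2 * (L + H * D) ^ 2 * Real.log T := by
        nlinarith [mul_nonneg (mul_nonneg hL hD) hH.le,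
          mul_nonneg (sq_nonneg (H * D)) (by linarith : (0 : ℝ) ≤ Real.log T)]

/-- Regret bound for Follow The Leader on strongly convex Lipschitz losses:
if each `f_t` (for `t = 1, …, T`) is `H`-strongly convex and `L`-Lipschitz on a convex
compact set `X` of diameter at most `D`, and `x_{t+1}` minimizes `Σ_{τ≤t} f_τ` over `X`,
then the regret is at most `2(L + HD)² ln(T) / H`. -/
theorem stmt16 {d : ℕ} (X : Set (EuclideanSpace ℝ (Fin d)))
    (hXne : X.Nonempty) (hXconv : Convex ℝ X) (hXc : IsCompact X)
    (D : ℝ) (hD : ∀ x ∈ X, ∀ y ∈ X, ‖x - y‖ ≤ D)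
    (H L : ℝ) (hH : 0 < H) (hL : 0 ≤ L)
    (T : ℕ) (hT : 2 ≤ T)
    (f : ℕ → EuclideanSpace ℝ (Fin d) → ℝ)
    (hsc : ∀ t ∈ Finset.Icc 1 T, ∀ x ∈ X, ∀ y ∈ X, ∀ l ∈ Set.Icc (0:ℝ) 1,
      f t (l • x + (1 - l) • y)
        ≤ l * f t x + (1 - l) * f t y - H / 2 * l * (1 - l) * ‖x - y‖ ^ 2)
    (hlip : ∀ t ∈ Finset.Icc 1 T, ∀ x ∈ X, ∀ y ∈ X, |f t x - f t y| ≤ L * ‖x - y‖)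
    (xs : ℕ → EuclideanSpace ℝ (Fin d)) (hxs : ∀ t ∈ Finset.Icc 1 T, xs t ∈ X)
    (hftl : ∀ t : ℕ, 1 ≤ t → t ≤ T - 1 →
      ∀ y ∈ X, ∑ τ ∈ Finset.Icc 1 t, f τ (xs (t + 1)) ≤ ∑ τ ∈ Finset.Icc 1 t, f τ y) :
    (∑ t ∈ Finset.Icc 1 T, f t (xs t))
        - sInf ((fun y => ∑ t ∈ Finset.Icc 1 T, f t y) '' X)
      ≤ 2 * (L + H * D) ^ 2 * Real.log T / H := by
  obtain ⟨x₀, hx₀⟩ := hXne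
  have hlip' : ∀ t ∈ Icc 1 T, ∀ x ∈ X, ∀ y ∈ X, f t x - f t y ≤ L * ‖x - y‖ :=
    fun t ht x hx y hy => (le_abs_self _).trans (hlip t ht x hx y hy)
  have hcont : ContinuousOn (fun y => ∑ t ∈ Icc 1 T, f t y) X :=
    continuousOn_finsetSum _ fun t ht => (LipschitzOnWith.of_dist_le' fun x hx y hy => by
      rw [Real.dist_eq, dist_eq_norm]
      exact hlip t ht x hx y hy).continuousOn
  obtain ⟨w, hw, hwmin⟩ := hXc.exists_isMinOn ⟨x₀, hx₀⟩ hcont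
  set y := Function.update xs (T + 1) w with hy_def
  have hy : ∀ t ∈ Icc 1 (T + 1), y t ∈ X := by
    intro t ht
    rcases eq_or_ne t (T + 1) with rfl | hne
    · simpa [hy_def] using hw
    · simpa [hy_def, hne] using hxs t (by simp at ht ⊢; omega)
  have hplayed : ∑ t ∈ Icc 1 T, f t (xs t) = ∑ t ∈ Icc 1 T, f t (y t) :=
    sum_congr rfl fun t ht => by simp [hy_def, show t ≠ T + 1 by simp at ht; omega]
  have hmin := isMinOn_partialSum_update f hftl hwmin
  rw [hplayed]
  calc _ ≤ ∑ t ∈ Icc 1 T, (f t (y t) - f t (y (t + 1))) :=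
        sum_sub_sInf_le_sum_sub_succ f y ⟨x₀, hx₀⟩ T
          (fun t ht => hy (t + 1) (by simp at ht ⊢; omega)) hmin
    _ ≤ L * D + 2 * L ^ 2 / H * Real.log T :=
        sum_Icc_sub_succ_le_of_strongConvexOn hXconv hH hL hD (by omega)
          (fun t ht => strongConvexOn_of_forall_mem_Icc hXconv (hsc t ht)) hlip' hy hmin
    _ ≤ 2 * (L + H * D) ^ 2 * Real.log T / H :=
        mul_add_div_mul_log_le hL ((norm_nonneg _).trans (hD x₀ hx₀ x₀ hx₀)) hH hT
end
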